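/- The function ω¹_∞(y) = ((|y|²−1)/(|y|²+1))·( (2/(|y|²−1))(υ_∞(y) + |y|²) + υ_∞(y) − log 8 − 2 ), with υ_∞(y) = log(8/(1+|y|²)²), extends to a smooth radial function on ℝ² satisfying Δω¹_∞ + (8/(1+|y|²)²) ω¹_∞ = (8/(1+|y|²)²) υ_∞ on ℝ². -/

import Mathlib

open MeasureTheory Real

noncomputable def lap (f : ℝ × ℝ → ℝ) (z : ℝ × ℝ) : ℝ :=
  deriv (fun x => deriv (fun x' => f (x', z.2)) x) z.1 +
  deriv (fun y => deriv (fun y' => f (z.1, y')) y) z.2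

noncomputable def upsilon (y : ℝ × ℝ) : ℝ :=
  Real.log (8 / (1 + (y.1 ^ 2 + y.2 ^ 2)) ^ 2)

noncomputable def myC : ℝ := 2 * Real.log 8 + 2

noncomputable def uu (c x : ℝ) : ℝ := 1 + x ^ 2 + c

noncomputable def ff (c x : ℝ) : ℝ := myC / uu c x - 2 * Real.log (uu c x)

noncomputable def ff1 (c x : ℝ) : ℝ :=
  -(2 * myC * x) / (uu c x) ^ 2 - 4 * x / uu c x

noncomputable def ff2 (c x : ℝ) : ℝ :=
  -(2 * myC) / (uu c x) ^ 2 + 8 * myC * x ^ 2 / (uu c x) ^ 3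
    - 4 / uu c x + 8 * x ^ 2 / (uu c x) ^ 2

lemma uu_pos {c : ℝ} (hc : 0 ≤ c) (x : ℝ) : 0 < uu c x := by
  have : (0:ℝ) ≤ x ^ 2 := sq_nonneg x
  unfold uu; linarith

lemma hasDerivAt_uu (c x : ℝ) : HasDerivAt (uu c) (2 * x) x := by
  have h : HasDerivAt (fun x : ℝ => 1 + x ^ 2 + c) (2 * x) x := by
    have := ((hasDerivAt_pow 2 x).const_add 1).add_const c
    simpa using this
  exact h

lemma hasDerivAt_ff {c : ℝ} (hc : 0 ≤ c) (x : ℝ) :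
    HasDerivAt (ff c) (ff1 c x) x := by
  have hu := hasDerivAt_uu c x
  have hpos := uu_pos hc x
  have h1 : HasDerivAt (fun x => myC / uu c x)
      ((0 * uu c x - myC * (2 * x)) / (uu c x) ^ 2) x :=
    (hasDerivAt_const x myC).div hu hpos.ne'
  have h2 : HasDerivAt (fun x => Real.log (uu c x)) (2 * x / uu c x) x :=
    hu.log hpos.ne'
  have := h1.sub (h2.const_mul 2)
  refine this.congr_deriv ?_
  unfold ff1
  have hne := hpos.ne'
  field_simp
  ring

lemma hasDerivAt_ff1 {c : ℝ} (hc : 0 ≤ c) (x : ℝ) :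
    HasDerivAt (ff1 c) (ff2 c x) x := by
  have hu := hasDerivAt_uu c x
  have hpos := uu_pos hc x
  have hu2 : HasDerivAt (fun x => (uu c x) ^ 2) (2 * uu c x ^ 1 * (2 * x)) x := hu.pow 2
  have hn1 : HasDerivAt (fun x : ℝ => -(2 * myC * x)) (-(2 * myC)) x := by
    exact ((hasDerivAt_id x).const_mul (2 * myC)).neg.congr_deriv (by simp)
  have h1 : HasDerivAt (fun x => -(2 * myC * x) / (uu c x) ^ 2)
      ((-(2 * myC) * (uu c x) ^ 2 - (-(2 * myC * x)) * (2 * uu c x ^ 1 * (2 * x)))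
        / ((uu c x) ^ 2) ^ 2) x :=
    hn1.div hu2 (pow_ne_zero 2 hpos.ne')
  have hn2 : HasDerivAt (fun x : ℝ => 4 * x) 4 x := by
    simpa using (hasDerivAt_id x).const_mul 4
  have h2 : HasDerivAt (fun x => 4 * x / uu c x)
      ((4 * uu c x - 4 * x * (2 * x)) / (uu c x) ^ 2) x := hn2.div hu hpos.ne'
  have := h1.sub h2
  refine this.congr_deriv ?_
  unfold ff2
  have hne := hpos.ne'
  field_simp
  ring

theorem stmt15 :
    ∃ ω : ℝ × ℝ → ℝ,
      ContDiff ℝ (⊤ : ℕ∞) ω ∧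
      (∀ y w : ℝ × ℝ, y.1 ^ 2 + y.2 ^ 2 = w.1 ^ 2 + w.2 ^ 2 → ω y = ω w) ∧
      (∀ y : ℝ × ℝ, y.1 ^ 2 + y.2 ^ 2 ≠ 1 →
        ω y = ((y.1 ^ 2 + y.2 ^ 2) - 1) / ((y.1 ^ 2 + y.2 ^ 2) + 1)
          * (2 / ((y.1 ^ 2 + y.2 ^ 2) - 1) * (upsilon y + (y.1 ^ 2 + y.2 ^ 2))
              + upsilon y - Real.log 8 - 2)) ∧
      (∀ y : ℝ × ℝ,
        lap ω y + 8 / (1 + (y.1 ^ 2 + y.2 ^ 2)) ^ 2 * ω y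
          = 8 / (1 + (y.1 ^ 2 + y.2 ^ 2)) ^ 2 * upsilon y) := by
  set v : ℝ × ℝ → ℝ := fun y => 1 + (y.1 ^ 2 + y.2 ^ 2) with hv
  have hvpos : ∀ y, 0 < v y := by
    intro y
    have h1 := sq_nonneg y.1
    have h2 := sq_nonneg y.2
    simp only [hv]; nlinarith
  refine ⟨fun y => myC / v y - 2 * Real.log (v y), ?_, ?_, ?_, ?_⟩
  · -- smoothness
    have hvc : ContDiff ℝ (⊤ : ℕ∞) v := by
      apply contDiff_const.add
      exact (contDiff_fst.pow 2).add (contDiff_snd.pow 2)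
    have hlog : ContDiff ℝ (⊤ : ℕ∞) (fun y => Real.log (v y)) := by
      rw [contDiff_iff_contDiffAt]
      intro y
      exact (Real.contDiffAt_log.mpr (hvpos y).ne').comp y hvc.contDiffAt
    exact (contDiff_const.div hvc fun y => (hvpos y).ne').sub (contDiff_const.mul hlog)
  · -- radial
    intro y w h
    simp only [hv, h]
  · -- formula away from |y|² = 1
    intro y hy
    set s := y.1 ^ 2 + y.2 ^ 2 with hs
    have hspos : (0:ℝ) < 1 + s := by
      have h1 := sq_nonneg y.1; have h2 := sq_nonneg y.2; nlinarith
    have hups : upsilon y = Real.log 8 - 2 * Real.log (1 + s) := by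
      unfold upsilon
      rw [← hs, Real.log_div (by norm_num) (pow_ne_zero 2 hspos.ne'), Real.log_pow]
      push_cast; ring
    have hvy : v y = 1 + s := rfl
    show myC / v y - 2 * Real.log (v y) = _
    rw [hvy, hups, myC]
    have h1 : s - 1 ≠ 0 := sub_ne_zero.mpr hy
    have h2 : 1 + s ≠ 0 := hspos.ne'
    have h3 : s + 1 ≠ 0 := ne_of_gt (by linarith)
    field_simp
    ring
  · -- PDE
    intro y
    set s := y.1 ^ 2 + y.2 ^ 2 with hs
    have hspos : (0:ℝ) < 1 + s := by
      have h1 := sq_nonneg y.1; have h2 := sq_nonneg y.2; nlinarith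
    have key : ∀ (c : ℝ), 0 ≤ c →
        (fun x : ℝ => myC / (1 + (x ^ 2 + c)) - 2 * Real.log (1 + (x ^ 2 + c))) = ff c := by
      intro c hc
      funext x
      simp only [ff, uu]
      ring_nf
    have hlapx : deriv (fun x => deriv
        (fun x' => myC / v (x', y.2) - 2 * Real.log (v (x', y.2))) x) y.1
        = ff2 (y.2 ^ 2) y.1 := by
      have hc : (0:ℝ) ≤ y.2 ^ 2 := sq_nonneg _
      have e1 : (fun x' => myC / v (x', y.2) - 2 * Real.log (v (x', y.2))) = ff (y.2 ^ 2) := by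
        funext x'
        simp only [hv, ff, uu]
        have : 1 + (x' ^ 2 + y.2 ^ 2) = 1 + x' ^ 2 + y.2 ^ 2 := by ring
        rw [this]
      rw [e1]
      have e2 : deriv (ff (y.2 ^ 2)) = ff1 (y.2 ^ 2) := by
        funext x
        exact (hasDerivAt_ff hc x).deriv
      rw [e2]
      exact (hasDerivAt_ff1 hc y.1).deriv
    have hlapy : deriv (fun t => deriv
        (fun y' => myC / v (y.1, y') - 2 * Real.log (v (y.1, y'))) t) y.2
        = ff2 (y.1 ^ 2) y.2 := by
      have hc : (0:ℝ) ≤ y.1 ^ 2 := sq_nonneg _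
      have e1 : (fun y' => myC / v (y.1, y') - 2 * Real.log (v (y.1, y'))) = ff (y.1 ^ 2) := by
        funext y'
        simp only [hv, ff, uu]
        have : 1 + (y.1 ^ 2 + y' ^ 2) = 1 + y' ^ 2 + y.1 ^ 2 := by ring
        rw [this]
      rw [e1]
      have e2 : deriv (ff (y.1 ^ 2)) = ff1 (y.1 ^ 2) := by
        funext x
        exact (hasDerivAt_ff hc x).deriv
      rw [e2]
      exact (hasDerivAt_ff1 hc y.2).deriv
    have hups : upsilon y = Real.log 8 - 2 * Real.log (1 + s) := by
      unfold upsilon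
      rw [← hs, Real.log_div (by norm_num) (pow_ne_zero 2 hspos.ne'), Real.log_pow]
      push_cast; ring
    have hvy : v y = 1 + s := rfl
    show lap _ y + _ = _
    unfold lap
    rw [hlapx, hlapy]
    show _ + 8 / (1 + s) ^ 2 * (myC / v y - 2 * Real.log (v y)) = _
    rw [hvy, hups]
    have hu1 : uu (y.2 ^ 2) y.1 = 1 + s := by unfold uu; rw [hs]; ring
    have hu2 : uu (y.1 ^ 2) y.2 = 1 + s := by unfold uu; rw [hs]; ring
    unfold ff2
    rw [hu1, hu2, myC]
    have h12 : s = y.1 ^ 2 + y.2 ^ 2 := hs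
    field_simp
    ring
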